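/- arXiv:2302.04963 — 2 statements merged into one kernel-verified Lean document; each statement's English description precedes it below -/
import Mathlib

section
/- Let d ≥ 4 and let L ∈ ℕ satisfy L + 1 ≤ d/(90² (log d)²). Let P : ℝ^d → ℝ^d be an orthogonal projection, and let v_0, v_1, …, v_L ∈ ℝ^d satisfy ‖v_l‖ ≤ 1 for all l. Define z_{−1} = 0, z_l = Σ_{l'=0}^{l} P v_{l'} for 0 ≤ l ≤ L, C = √(40 (L+1) log d), x̄ = −z_L / C, and t₀ = 3 √(log d / d). Assume that for every 0 ≤ l ≤ L: (i) |⟨v_l, z_{l−1}⟩| ≤ t₀ ‖z_{l−1}‖ and |⟨P v_l, z_{l−1}⟩| ≤ t₀ ‖z_{l−1}‖; (ii) ‖P v_l‖² ≥ 1/2 − 2 √(log d / d) − 2/d³; and (iii) |Σ_{l'=l+1}^{L} ⟨v_l, P v_{l'}⟩| ≤ 8 log d · √((L+1)/d). Then ‖x̄‖ ≤ 1, x̄ lies in the range of P, and ⟨v_l, x̄⟩ ≤ −1/(40 √((L+1) log d)) for every 0 ≤ l ≤ L. -/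
/-!
Write `a = log d`; the hypothesis on `L` says `a² (L+1) / d ≤ 1/90²`, which makes every error
term small. Since `P` is a contraction, (i) gives
`‖z_{l+1}‖² = ‖z_l‖² + 2 ⟨z_l, P v_{l+1}⟩ + ‖P v_{l+1}‖² ≤ ‖z_l‖² + 2 t₀ ‖z_l‖ + 1`, and as long as
`‖z_l‖² ≤ 2 (L+1)` the drift satisfies `(t₀ ‖z_l‖)² ≤ 18 a (L+1) / d ≤ 1/20²`. So
`‖z_l‖² ≤ 2 (l+1)` by induction, whence `‖z_L‖ ≤ C`. In
`⟨v_l, z_L⟩ = ⟨v_l, z_{l-1}⟩ + ‖P v_l‖² + Σ_{l' > l} ⟨v_l, P v_{l'}⟩` the middle term is almost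
`1/2` by (ii) and the others are small by (i) and (iii), so `⟨v_l, z_L⟩ ≥ 1/4`, while
`C ≤ 10 √((L+1) a)`.
-/

open scoped RealInnerProductSpace
open Finset

namespace LinearMap.IsSymmetricProjection

variable {E : Type*} [NormedAddCommGroup E] [InnerProductSpace ℝ E] {P : E →ₗ[ℝ] E}

theorem inner_map_self_eq_norm_sq (hP : P.IsSymmetricProjection) (x : E) :
    ⟪x, P x⟫ = ‖P x‖ ^ 2 := by
  rw [← real_inner_self_eq_norm_sq, hP.isSymmetric x (P x), ← Module.End.mul_apply,
    hP.isIdempotentElem.eq]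

theorem norm_map_le (hP : P.IsSymmetricProjection) (x : E) : ‖P x‖ ≤ ‖x‖ := by
  have h := hP.inner_map_self_eq_norm_sq x ▸ real_inner_le_norm x (P x)
  nlinarith [norm_nonneg (P x), norm_nonneg x]

theorem inner_sum_range_succ_map_eq (hP : P.IsSymmetricProjection) (v : ℕ → E) {l L : ℕ}
    (hl : l ≤ L) :
    ⟪v l, ∑ i ∈ Finset.range (L + 1), P (v i)⟫ = ⟪v l, ∑ i ∈ Finset.range l, P (v i)⟫ +
      ‖P (v l)‖ ^ 2 + ∑ i ∈ Icc (l + 1) L, ⟪v l, P (v i)⟫ := by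
  rw [← sum_range_add_sum_Ico _ (by omega : l + 1 ≤ L + 1), sum_range_succ,
    Ico_add_one_right_eq_Icc, inner_add_right, inner_add_right, inner_sum (s := Icc _ _),
    hP.inner_map_self_eq_norm_sq]

end LinearMap.IsSymmetricProjection

theorem norm_sq_sum_range_le_two_mul {E : Type*} [NormedAddCommGroup E] [InnerProductSpace ℝ E]
    (w : ℕ → E) {N : ℕ} {t : ℝ} (ht : ∀ r : ℝ, r ^ 2 ≤ 2 * N → t * r ≤ 1 / 2)
    (hw : ∀ n < N, ‖w n‖ ≤ 1)
    (hdrift : ∀ n < N, ⟪∑ i ∈ range n, w i, w n⟫ ≤ t * ‖∑ i ∈ range n, w i‖) :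
    ∀ n ≤ N, ‖∑ i ∈ range n, w i‖ ^ 2 ≤ 2 * n := by
  intro n hn
  induction n with
  | zero => simp
  | succ n ih =>
    have hz := ih (by omega)
    have hnN : (n : ℝ) ≤ N := by exact_mod_cast (by omega : n ≤ N)
    have hdrift_le := ht _ (hz.trans (by linarith : 2 * (n : ℝ) ≤ 2 * N))
    rw [sum_range_succ, norm_add_sq_real]
    push_cast
    nlinarith [hdrift n hn, hw n hn, norm_nonneg (w n)]

section Numerics

variable {d L : ℕ}

theorem one_le_log_of_four_le (hd : 4 ≤ d) : 1 ≤ Real.log d := by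
  rw [Real.le_log_iff_exp_le (by positivity)]
  have : (4 : ℝ) ≤ d := by exact_mod_cast hd
  linarith [Real.exp_one_lt_d9]

theorem log_sq_mul_div_le (hd : 4 ≤ d)
    (hL : (L : ℝ) + 1 ≤ (d : ℝ) / (90 ^ 2 * Real.log d ^ 2)) :
    Real.log d ^ 2 * ((L + 1) / d) ≤ 1 / 90 ^ 2 := by
  have ha := one_le_log_of_four_le hd
  have hd0 : (0 : ℝ) < d := by positivity
  rw [le_div_iff₀ (by positivity)] at hL
  rw [mul_div_assoc', div_le_div_iff₀ hd0 (by norm_num)]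
  linarith

theorem log_mul_div_le (hd : 4 ≤ d)
    (hL : (L : ℝ) + 1 ≤ (d : ℝ) / (90 ^ 2 * Real.log d ^ 2)) :
    Real.log d * ((L + 1) / d) ≤ 1 / 90 ^ 2 := by
  have ha := one_le_log_of_four_le hd
  refine le_trans ?_ (log_sq_mul_div_le hd hL)
  gcongr
  nlinarith

theorem log_div_le (hd : 4 ≤ d)
    (hL : (L : ℝ) + 1 ≤ (d : ℝ) / (90 ^ 2 * Real.log d ^ 2)) :
    Real.log d / d ≤ 1 / 90 ^ 2 := by
  refine le_trans ?_ (log_mul_div_le hd hL)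
  rw [mul_div_assoc']
  gcongr
  exact le_mul_of_one_le_right (zero_le_one.trans (one_le_log_of_four_le hd))
    (by linarith [(L.cast_nonneg : (0 : ℝ) ≤ L)])

theorem sqrt_log_div_le (hd : 4 ≤ d)
    (hL : (L : ℝ) + 1 ≤ (d : ℝ) / (90 ^ 2 * Real.log d ^ 2)) :
    Real.sqrt (Real.log d / d) ≤ 1 / 90 :=
  (Real.sqrt_le_left (by norm_num)).2 (one_div_pow (90 : ℝ) 2 ▸ log_div_le hd hL)

theorem log_mul_sqrt_div_le (hd : 4 ≤ d)
    (hL : (L : ℝ) + 1 ≤ (d : ℝ) / (90 ^ 2 * Real.log d ^ 2)) :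
    Real.log d * Real.sqrt ((L + 1) / d) ≤ 1 / 90 := by
  refine (abs_le_of_sq_le_sq' ?_ (by norm_num)).2
  rw [mul_pow, Real.sq_sqrt (by positivity), one_div_pow]
  exact log_sq_mul_div_le hd hL

theorem three_mul_sqrt_log_div_mul_le (hd : 4 ≤ d)
    (hL : (L : ℝ) + 1 ≤ (d : ℝ) / (90 ^ 2 * Real.log d ^ 2)) {r : ℝ}
    (hr : r ^ 2 ≤ 2 * (L + 1)) : 3 * Real.sqrt (Real.log d / d) * r ≤ 1 / 20 := by
  refine (abs_le_of_sq_le_sq' ?_ (by norm_num)).2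
  have ha := log_mul_div_le hd hL
  rw [mul_pow, mul_pow, Real.sq_sqrt (div_nonneg (Real.log_natCast_nonneg d) d.cast_nonneg)]
  calc 3 ^ 2 * (Real.log d / d) * r ^ 2 ≤ 3 ^ 2 * (Real.log d / d) * (2 * (L + 1)) := by gcongr
    _ = 18 * (Real.log d * ((L + 1) / d)) := by ring
    _ ≤ (1 / 20) ^ 2 := by linarith

theorem two_div_cube_le (hd : 4 ≤ d) : 2 / (d : ℝ) ^ 3 ≤ 1 / 32 := by
  have : (4 : ℝ) ^ 3 ≤ (d : ℝ) ^ 3 := by gcongr; exact_mod_cast hd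
  rw [div_le_div_iff₀ (by positivity) (by norm_num)]
  linarith

end Numerics

theorem one_div_forty_mul_sqrt_le {x y : ℝ} (hx : 0 < x) (hy : 1 / 4 ≤ y) :
    1 / (40 * Real.sqrt x) ≤ (Real.sqrt (40 * x))⁻¹ * y := by
  have hsx : 0 < Real.sqrt x := Real.sqrt_pos.2 hx
  have h40 : Real.sqrt (40 * x) ≤ 10 * Real.sqrt x := by
    rw [Real.sqrt_mul (by norm_num)]
    gcongr
    rw [Real.sqrt_le_left (by norm_num)]
    norm_num
  calc 1 / (40 * Real.sqrt x) = 1 / 4 / (10 * Real.sqrt x) := by field_simp; ring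
    _ ≤ 1 / 4 / Real.sqrt (40 * x) := by gcongr
    _ ≤ (Real.sqrt (40 * x))⁻¹ * y := by
      rw [inv_mul_eq_div]
      gcongr

/-- Construction of a feasible point with low objective value: under the concentration
events (i)–(iii), the normalized sum `x̄ = -z_L/C` of the projected vectors `P v_l` lies
in the unit ball, belongs to the range of `P`, and satisfies
`⟨v_l, x̄⟩ ≤ -1/(40 √((L+1) log d))` for every `l ≤ L`.
Here `z l` denotes the paper's `z_{l-1} = Σ_{l' < l} P v_{l'}`, so that `z 0 = 0` and the
paper's `z_L` is `z (L+1)`. -/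
theorem low_optimum_construction (d L : ℕ) (hd : 4 ≤ d)
    (hL : (L : ℝ) + 1 ≤ (d : ℝ) / (90 ^ 2 * Real.log d ^ 2))
    (P : EuclideanSpace ℝ (Fin d) →ₗ[ℝ] EuclideanSpace ℝ (Fin d))
    (hidem : ∀ x, P (P x) = P x)
    (hsa : ∀ x y, ⟪P x, y⟫ = ⟪x, P y⟫)
    (v : ℕ → EuclideanSpace ℝ (Fin d)) (hv : ∀ l ≤ L, ‖v l‖ ≤ 1)
    (z : ℕ → EuclideanSpace ℝ (Fin d))
    (hz : ∀ l, z l = ∑ l' ∈ Finset.range l, P (v l'))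
    (C t₀ : ℝ)
    (hC : C = Real.sqrt (40 * ((L : ℝ) + 1) * Real.log d))
    (ht₀ : t₀ = 3 * Real.sqrt (Real.log d / d))
    (xbar : EuclideanSpace ℝ (Fin d)) (hxbar : xbar = -(C⁻¹ • z (L + 1)))
    (h1 : ∀ l ≤ L, |⟪v l, z l⟫| ≤ t₀ * ‖z l‖ ∧ |⟪P (v l), z l⟫| ≤ t₀ * ‖z l‖)
    (h2 : ∀ l ≤ L,
      1 / 2 - 2 * Real.sqrt (Real.log d / d) - 2 / (d : ℝ) ^ 3 ≤ ‖P (v l)‖ ^ 2)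
    (h3 : ∀ l ≤ L,
      |∑ l' ∈ Finset.Icc (l + 1) L, ⟪v l, P (v l')⟫|
        ≤ 8 * Real.log d * Real.sqrt (((L : ℝ) + 1) / d)) :
    ‖xbar‖ ≤ 1 ∧ xbar ∈ LinearMap.range P ∧
      ∀ l ≤ L, ⟪v l, xbar⟫ ≤ -(1 / (40 * Real.sqrt (((L : ℝ) + 1) * Real.log d))) := by
  have hP : P.IsSymmetricProjection := ⟨LinearMap.ext hidem, hsa⟩
  have ha := one_le_log_of_four_le hd
  have hdrift (r : ℝ) (hr : r ^ 2 ≤ 2 * (L + 1)) : t₀ * r ≤ 1 / 20 :=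
    ht₀ ▸ three_mul_sqrt_log_div_mul_le hd hL hr
  have hzl : ∀ l ≤ L + 1, ‖z l‖ ^ 2 ≤ 2 * (L + 1) := by
    have hgrowth := norm_sq_sum_range_le_two_mul (fun l => P (v l)) (N := L + 1) (t := t₀)
      (fun r hr => (hdrift r (by exact_mod_cast hr)).trans (by norm_num))
      (fun n hn => (hP.norm_map_le _).trans (hv n (by omega)))
      fun n hn => by
        rw [← hz, real_inner_comm]
        exact (le_abs_self _).trans (h1 n (by omega)).2
    intro l hl
    rw [hz]
    exact (hgrowth l hl).trans (by gcongr; exact_mod_cast hl)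
  refine ⟨?_, ?_, fun l hl => ?_⟩
  · have hzC : ‖z (L + 1)‖ ≤ C := by
      rw [hC, Real.le_sqrt (norm_nonneg _) (by positivity)]
      nlinarith [hzl (L + 1) le_rfl]
    rw [hxbar, norm_neg, norm_smul, norm_inv, Real.norm_eq_abs,
      abs_of_nonneg (hC ▸ Real.sqrt_nonneg _)]
    exact inv_mul_le_one_of_le₀ hzC ((norm_nonneg _).trans hzC)
  · rw [hxbar, hz]
    exact neg_mem (Submodule.smul_mem _ _
      (Submodule.sum_mem _ fun i _ => LinearMap.mem_range_self P (v i)))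
  · have hsplit := hP.inner_sum_range_succ_map_eq v hl
    rw [← hz, ← hz] at hsplit
    have hlow : 1 / 4 ≤ ⟪v l, z (L + 1)⟫ := by
      linarith [(abs_le.mp (h1 l hl).1).1, hdrift ‖z l‖ (hzl l (by omega)), h2 l hl,
        (abs_le.mp (h3 l hl)).1, sqrt_log_div_le hd hL, log_mul_sqrt_div_le hd hL,
        two_div_cube_le hd]
    rw [hxbar, inner_neg_right, real_inner_smul_right, neg_le_neg_iff, hC, mul_assoc]
    exact one_div_forty_mul_sqrt_le (mul_pos (by positivity) (by linarith)) hlow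
end

section
/- Let d, n ≥ 1, let A ∈ {−1,1}^{n×d}, let w_0, w_1, …, w_m ∈ ℝ^d be unit-norm vectors, and let η₀, η₁ > 0. Define Q = {x ∈ B_d(0,1) : ‖A x‖_∞ ≤ η₀ and ⟨w_j, x⟩ ≤ −η₁ for all 0 ≤ j ≤ m}. Suppose x̄ ∈ B_d(0,1) satisfies ‖A x̄‖_∞ = 0 and ⟨w_j, x̄⟩ ≤ −4 η₁ for all 0 ≤ j ≤ m. Set ε = min{η₀/√d, η₁}/2. Then B_d(x̄ − ε · x̄/‖x̄‖, ε) ⊆ B_d(0,1) ∩ B_d(x̄, 2ε) ⊆ Q; in particular Q contains a Euclidean ball of radius ε. -/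
/-!
Each constraint `x ↦ ⟪v, x⟫` is `‖v‖`-Lipschitz, so the slack `η₀` (rows of norm
`√d`) and `3η₁` at `x̄` survive on `closedBall x̄ (2ε)`. Shifting `x̄` by `ε` towards the origin
gives a ball of radius `ε` inside this one that also stays in the unit ball.
-/

open scoped RealInnerProductSpace

open Metric

section ShiftedBall

variable {E : Type*} [NormedAddCommGroup E] [NormedSpace ℝ E] {x : E} {r : ℝ}

theorem norm_sub_div_norm_smul_self (hx : x ≠ 0) (hr : r ≤ ‖x‖) :
    ‖x - (r / ‖x‖) • x‖ = ‖x‖ - r := by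
  have hx' : 0 < ‖x‖ := norm_pos_iff.2 hx
  rw [show x - (r / ‖x‖) • x = (1 - r / ‖x‖) • x by rw [sub_smul, one_smul],
    norm_smul_of_nonneg (sub_nonneg.2 (div_le_one_of_le₀ hr hx'.le))]
  field_simp

theorem dist_sub_div_norm_smul_self (hx : x ≠ 0) : dist (x - (r / ‖x‖) • x) x = |r| := by
  rw [dist_eq_norm, sub_sub_cancel_left, norm_neg, norm_smul, Real.norm_eq_abs, abs_div,
    abs_norm, div_mul_cancel₀ _ (norm_ne_zero_iff.2 hx)]

theorem closedBall_sub_div_norm_smul_self_subset (hx : x ≠ 0) (hr₀ : 0 ≤ r)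
    (hr : r ≤ ‖x‖) :
    closedBall (x - (r / ‖x‖) • x) r ⊆ closedBall 0 ‖x‖ ∩ closedBall x (2 * r) := by
  refine Set.subset_inter (closedBall_subset_closedBall' ?_) (closedBall_subset_closedBall' ?_)
  · rw [dist_zero_right, norm_sub_div_norm_smul_self hx hr]; linarith
  · rw [dist_sub_div_norm_smul_self hx, abs_of_nonneg hr₀]; linarith

end ShiftedBall

section InnerProduct

variable {F : Type*} [NormedAddCommGroup F] [InnerProductSpace ℝ F]

theorem abs_inner_sub_inner_le (v x y : F) : |⟪v, y⟫ - ⟪v, x⟫| ≤ ‖v‖ * dist y x := by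
  rw [← inner_sub_right, dist_eq_norm]
  exact abs_real_inner_le_norm v (y - x)

theorem le_norm_mul_norm_of_inner_le_neg {v x : F} {c : ℝ} (h : ⟪v, x⟫ ≤ -c) :
    c ≤ ‖v‖ * ‖x‖ := by
  linarith [neg_le_abs ⟪v, x⟫, abs_real_inner_le_norm v x]

end InnerProduct

theorem EuclideanSpace.norm_eq_sqrt_card_of_abs_eq_one {d : ℕ} {v : EuclideanSpace ℝ (Fin d)}
    (hv : ∀ j, |v j| = 1) : ‖v‖ = Real.sqrt d := by
  simp [EuclideanSpace.norm_eq, hv]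

theorem feasible_set_contains_ball_general (d n m : ℕ) (hd : 1 ≤ d)
    (a : Fin n → EuclideanSpace ℝ (Fin d))
    (ha : ∀ i j, a i j = 1 ∨ a i j = -1)
    (w : Fin (m + 1) → EuclideanSpace ℝ (Fin d)) (hw : ∀ j, ‖w j‖ = 1)
    (η₀ η₁ : ℝ) (hη₀ : 0 < η₀) (hη₁ : 0 < η₁)
    (Q : Set (EuclideanSpace ℝ (Fin d)))
    (hQ : Q = {x ∈ Metric.closedBall (0 : EuclideanSpace ℝ (Fin d)) 1 |
        (∀ i, |⟪a i, x⟫| ≤ η₀) ∧ ∀ j, ⟪w j, x⟫ ≤ -η₁})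
    (xbar : EuclideanSpace ℝ (Fin d))
    (hxbar : xbar ∈ Metric.closedBall (0 : EuclideanSpace ℝ (Fin d)) 1)
    (hA : ∀ i, ⟪a i, xbar⟫ = 0)
    (hws : ∀ j, ⟪w j, xbar⟫ ≤ -(4 * η₁))
    (ε : ℝ) (hε : ε = min (η₀ / Real.sqrt d) η₁ / 2) :
    Metric.closedBall (xbar - (ε / ‖xbar‖) • xbar) ε
        ⊆ Metric.closedBall (0 : EuclideanSpace ℝ (Fin d)) 1 ∩ Metric.closedBall xbar (2 * ε) ∧
      Metric.closedBall (0 : EuclideanSpace ℝ (Fin d)) 1 ∩ Metric.closedBall xbar (2 * ε) ⊆ Q ∧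
      ∃ c, Metric.closedBall c ε ⊆ Q := by
  subst hQ
  have hsqrt : 0 < Real.sqrt d := Real.sqrt_pos.2 (by exact_mod_cast hd)
  have hε₀ : 0 ≤ ε := by rw [hε]; positivity
  have hε_η₀ : 2 * ε ≤ η₀ / Real.sqrt d := by rw [hε]; linarith [min_le_left (η₀ / √d) η₁]
  have hε_η₁ : 2 * ε ≤ η₁ := by rw [hε]; linarith [min_le_right (η₀ / √d) η₁]
  have hxbar_norm : 4 * η₁ ≤ ‖xbar‖ := by
    simpa [hw 0] using le_norm_mul_norm_of_inner_le_neg (hws 0)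
  have hxbar₀ : xbar ≠ 0 := norm_pos_iff.1 (by linarith)
  have hball := (closedBall_sub_div_norm_smul_self_subset hxbar₀ hε₀ (by linarith)).trans <|
    Set.inter_subset_inter_left _ <|
      closedBall_subset_closedBall (mem_closedBall_zero_iff.1 hxbar)
  have hfeasible : closedBall 0 1 ∩ closedBall xbar (2 * ε) ⊆ {x ∈ closedBall 0 1 |
      (∀ i, |⟪a i, x⟫| ≤ η₀) ∧ ∀ j, ⟪w j, x⟫ ≤ -η₁} := by
    rintro x ⟨hx₁, hx₂⟩
    refine ⟨hx₁, fun i => ?_, fun j => ?_⟩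
    · have hai : ‖a i‖ = Real.sqrt d := EuclideanSpace.norm_eq_sqrt_card_of_abs_eq_one
        fun j => by rcases ha i j with h | h <;> simp [h]
      calc |⟪a i, x⟫| = |⟪a i, x⟫ - ⟪a i, xbar⟫| := by rw [hA i, sub_zero]
        _ ≤ ‖a i‖ * dist x xbar := abs_inner_sub_inner_le _ _ _
        _ ≤ Real.sqrt d * (η₀ / Real.sqrt d) := by
            rw [hai]; gcongr; exact (mem_closedBall.1 hx₂).trans hε_η₀
        _ = η₀ := mul_div_cancel₀ η₀ hsqrt.ne'
    · have hwj := (abs_sub_le_iff.1 (abs_inner_sub_inner_le (w j) xbar x)).1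
      rw [hw j, one_mul] at hwj
      linarith [hws j, mem_closedBall.1 hx₂]
  exact ⟨hball, hfeasible, _, hball.trans hfeasible⟩

/-- If `x̄` is in the unit ball, exactly orthogonal to every (±1)-row `a_i` of `A`, and
satisfies `⟨w_j, x̄⟩ ≤ -4η₁` for every `j`, then with `ε = min{η₀/√d, η₁}/2` the set
`Q = {x ∈ B(0,1) : ‖Ax‖_∞ ≤ η₀, ⟨w_j, x⟩ ≤ -η₁ ∀j}` contains
`B(x̄ - ε x̄/‖x̄‖, ε) ⊆ B(0,1) ∩ B(x̄, 2ε)`; in particular `Q` contains a ball of radius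
`ε`. -/
theorem feasible_set_contains_ball (d n m : ℕ) (hd : 1 ≤ d) (hn : 1 ≤ n)
    (a : Fin n → EuclideanSpace ℝ (Fin d))
    (ha : ∀ i j, a i j = 1 ∨ a i j = -1)
    (w : Fin (m + 1) → EuclideanSpace ℝ (Fin d)) (hw : ∀ j, ‖w j‖ = 1)
    (η₀ η₁ : ℝ) (hη₀ : 0 < η₀) (hη₁ : 0 < η₁)
    (Q : Set (EuclideanSpace ℝ (Fin d)))
    (hQ : Q = {x ∈ Metric.closedBall (0 : EuclideanSpace ℝ (Fin d)) 1 |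
        (∀ i, |⟪a i, x⟫| ≤ η₀) ∧ ∀ j, ⟪w j, x⟫ ≤ -η₁})
    (xbar : EuclideanSpace ℝ (Fin d))
    (hxbar : xbar ∈ Metric.closedBall (0 : EuclideanSpace ℝ (Fin d)) 1)
    (hA : ∀ i, ⟪a i, xbar⟫ = 0)
    (hws : ∀ j, ⟪w j, xbar⟫ ≤ -(4 * η₁))
    (ε : ℝ) (hε : ε = min (η₀ / Real.sqrt d) η₁ / 2) :
    Metric.closedBall (xbar - (ε / ‖xbar‖) • xbar) ε
        ⊆ Metric.closedBall (0 : EuclideanSpace ℝ (Fin d)) 1 ∩ Metric.closedBall xbar (2 * ε) ∧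
      Metric.closedBall (0 : EuclideanSpace ℝ (Fin d)) 1 ∩ Metric.closedBall xbar (2 * ε) ⊆ Q ∧
      ∃ c, Metric.closedBall c ε ⊆ Q :=
  feasible_set_contains_ball_general d n m hd a ha w hw η₀ η₁ hη₀ hη₁ Q hQ xbar hxbar hA hws ε hε
end
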